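/- Let μ be a compactly supported probability measure on ℝ^d and Σ a symmetric positive definite d×d matrix. Define p(x) := ∫ exp(−(1/2)(x − y)ᵀ Σ⁻¹ (x − y)) dμ(y), and for each x ∈ ℝ^d let μ_x be the probability measure with density proportional to exp(−(1/2)(x − y)ᵀ Σ⁻¹ (x − y)) with respect to μ. Then p is smooth and strictly positive, and for every x ∈ ℝ^d the gradient of its logarithm satisfies ∇ log p(x) = −Σ⁻¹ (x − E_{μ_x}[y]), where E_{μ_x}[y] = ∫ y dμ_x(y) is the mean of μ_x. -/

import Mathlib

/-! Since `μ` has compact support, `p` may be differentiated under the integral sign as often as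
one likes. Differentiating the Gaussian kernel once gives
`∇p(x) = -∫ Σ⁻¹(x - y) e^{-½(x-y)ᵀΣ⁻¹(x-y)} dμ(y)`, and since the kernel divided by `p(x)` is
the density of `μ_x`, this equals `-p(x) Σ⁻¹(x - E_{μ_x}[y])`. Dividing by `p(x) > 0` gives the
score formula. -/

open MeasureTheory Set Matrix

noncomputable section

/-- The (unnormalized) Gaussian-mixture density `p(x) = ∫ exp(-½(x-y)ᵀΣ⁻¹(x-y)) dμ(y)`. -/
def gmP {d : ℕ} (μ : Measure (Fin d → ℝ)) (S : Matrix (Fin d) (Fin d) ℝ)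
    (x : Fin d → ℝ) : ℝ :=
  ∫ y, Real.exp (-(1/2) * ((x - y) ⬝ᵥ (S⁻¹ *ᵥ (x - y)))) ∂μ

/-- The tilted mixing measure `μ_x`, with density proportional to
`exp(-½(x-y)ᵀΣ⁻¹(x-y))` with respect to `μ`. -/
def gmTilt {d : ℕ} (μ : Measure (Fin d → ℝ)) (S : Matrix (Fin d) (Fin d) ℝ)
    (x : Fin d → ℝ) : Measure (Fin d → ℝ) :=
  ((μ.withDensity fun y =>
      ENNReal.ofReal (Real.exp (-(1/2) * ((x - y) ⬝ᵥ (S⁻¹ *ᵥ (x - y)))))) univ)⁻¹ •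
    μ.withDensity fun y =>
      ENNReal.ofReal (Real.exp (-(1/2) * ((x - y) ⬝ᵥ (S⁻¹ *ᵥ (x - y)))))

section IntegralCompSub

variable {E F : Type*} [NormedAddCommGroup E] [NormedSpace ℝ E] [FiniteDimensional ℝ E]
  [MeasurableSpace E] [BorelSpace E] [NormedAddCommGroup F]
  {μ : Measure E} [IsFiniteMeasure μ] {K : Set E}

theorem Continuous.integrable_of_measure_compl_eq_zero {f : E → F} (hf : Continuous f)
    (hK : IsCompact K) (hμK : μ Kᶜ = 0) : Integrable f μ := by
  rw [← Measure.restrict_eq_self_of_ae_mem (ae_iff.2 hμK)]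
  exact hf.continuousOn.integrableOn_compact hK

variable [NormedSpace ℝ F]

theorem continuous_integral_comp_sub (hK : IsCompact K) (hμK : μ Kᶜ = 0) {g : E → F}
    (hg : Continuous g) : Continuous (fun x => ∫ y, g (x - y) ∂μ) := by
  rw [← Measure.restrict_eq_self_of_ae_mem (ae_iff.2 hμK)]
  exact continuous_parametric_integral_of_continuous (f := fun x y => g (x - y))
    (hg.comp continuous_sub) hK

theorem hasFDerivAt_integral_comp_sub (hK : IsCompact K) (hμK : μ Kᶜ = 0) {g : E → F}
    (hg : ContDiff ℝ 1 g) (x₀ : E) :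
    HasFDerivAt (fun x => ∫ y, g (x - y) ∂μ) (∫ y, fderiv ℝ g (x₀ - y) ∂μ) x₀ := by
  have hg' : Continuous (fderiv ℝ g) := hg.continuous_fderiv one_ne_zero
  obtain ⟨C, hC⟩ := (((isCompact_closedBall x₀ 1).prod hK).image
    continuous_sub).exists_bound_of_continuousOn hg'.continuousOn
  refine hasFDerivAt_integral_of_dominated_of_fderiv_le
    (F' := fun x y => fderiv ℝ g (x - y)) (bound := fun _ => C)
    (Metric.closedBall_mem_nhds x₀ one_pos)
    (.of_forall fun x => (hg.continuous.comp (continuous_sub_left x)).aestronglyMeasurable)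
    ((hg.continuous.comp (continuous_sub_left x₀)).integrable_of_measure_compl_eq_zero hK hμK)
    (hg'.comp (continuous_sub_left x₀)).aestronglyMeasurable ?_ (integrable_const C) ?_
  · filter_upwards [ae_iff.2 hμK] with y hy x hx using hC _ ⟨(x, y), ⟨hx, hy⟩, rfl⟩
  · refine .of_forall fun y x _ => ?_
    exact (hg.differentiable one_ne_zero _).hasFDerivAt.comp x ((hasFDerivAt_id x).sub_const y)

theorem fderiv_integral_comp_sub_apply (hK : IsCompact K) (hμK : μ Kᶜ = 0) {g : E → F}
    (hg : ContDiff ℝ 1 g) (x v : E) :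
    fderiv ℝ (fun x => ∫ y, g (x - y) ∂μ) x v = ∫ y, fderiv ℝ g (x - y) v ∂μ := by
  rw [(hasFDerivAt_integral_comp_sub hK hμK hg x).fderiv, ContinuousLinearMap.integral_apply]
  exact ((hg.continuous_fderiv one_ne_zero).comp
    (continuous_sub_left x)).integrable_of_measure_compl_eq_zero hK hμK

theorem contDiff_integral_comp_sub (hK : IsCompact K) (hμK : μ Kᶜ = 0) {n : ℕ∞} {g : E → F}
    (hg : ContDiff ℝ n g) : ContDiff ℝ n (fun x => ∫ y, g (x - y) ∂μ) := by
  suffices h : ∀ k : ℕ, ∀ {g : E → F}, ContDiff ℝ k g →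
      ContDiff ℝ k (fun x => ∫ y, g (x - y) ∂μ) by
    induction n with
    | top => exact contDiff_infty.2 fun k => h k (hg.of_le (by exact_mod_cast le_top))
    | coe k => exact h k hg
  -- Inducting through directional derivatives keeps the codomain `F` (and its universe) fixed.
  intro k
  induction k with
  | zero =>
    exact fun hg => contDiff_zero.2 (continuous_integral_comp_sub hK hμK (contDiff_zero.1 hg))
  | succ k ih =>
    intro g hg
    push_cast at hg ⊢
    have hg₁ : ContDiff ℝ 1 g := hg.of_le le_add_self
    refine contDiff_succ_iff_fderiv_apply.2
      ⟨fun x => (hasFDerivAt_integral_comp_sub hK hμK hg₁ x).differentiableAt,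
        fun h => by simp at h, fun v => ?_⟩
    simp_rw [fderiv_integral_comp_sub_apply hK hμK hg₁]
    exact ih ((contDiff_succ_iff_fderiv_apply.1 hg).2.2 v)

end IntegralCompSub

theorem integral_inv_smul_withDensity_ofReal {α E : Type*} [MeasurableSpace α] {μ : Measure α}
    [NormedAddCommGroup E] [NormedSpace ℝ E] {f : α → ℝ} (hf_nonneg : 0 ≤ᵐ[μ] f)
    (hf_int : Integrable f μ) (φ : α → E) :
    ∫ y, φ y ∂(((μ.withDensity fun y => ENNReal.ofReal (f y)) univ)⁻¹ •
      μ.withDensity fun y => ENNReal.ofReal (f y)) = (∫ y, f y ∂μ)⁻¹ • ∫ y, f y • φ y ∂μ := by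
  rw [integral_smul_measure, withDensity_apply _ MeasurableSet.univ, Measure.restrict_univ,
    ← ofReal_integral_eq_lintegral_ofReal hf_int hf_nonneg, ENNReal.toReal_inv,
    ENNReal.toReal_ofReal (integral_nonneg_of_ae hf_nonneg),
    integral_withDensity_eq_integral_toReal_smul₀ hf_int.aemeasurable.ennreal_ofReal
      (.of_forall fun _ => ENNReal.ofReal_lt_top)]
  refine congrArg _ (integral_congr_ae ?_)
  filter_upwards [hf_nonneg] with y hy
  rw [ENNReal.toReal_ofReal hy]

def gaussianKernel {d : ℕ} (A : Matrix (Fin d) (Fin d) ℝ) (z : Fin d → ℝ) : ℝ :=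
  Real.exp (-(1/2) * (z ⬝ᵥ (A *ᵥ z)))

namespace gaussianKernel

variable {d : ℕ} (A : Matrix (Fin d) (Fin d) ℝ)

theorem pos (z : Fin d → ℝ) : 0 < gaussianKernel A z :=
  Real.exp_pos _

theorem contDiff {n : WithTop ℕ∞} : ContDiff ℝ n (gaussianKernel A) := by
  unfold gaussianKernel
  simp only [dotProduct, mulVec]
  fun_prop

@[fun_prop]
theorem continuous : Continuous (gaussianKernel A) :=
  (contDiff A (n := 0)).continuous

theorem fderiv_apply {A : Matrix (Fin d) (Fin d) ℝ} (hA : A.IsSymm) (z v : Fin d → ℝ) :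
    fderiv ℝ (gaussianKernel A) z v = -((A *ᵥ z) ⬝ᵥ v * gaussianKernel A z) := by
  let B : (Fin d → ℝ) →L[ℝ] (Fin d → ℝ) →L[ℝ] ℝ := LinearMap.toContinuousBilinearMap
    (Matrix.toLinearMap₂' ℝ A : (Fin d → ℝ) →ₗ[ℝ] (Fin d → ℝ) →ₗ[ℝ] ℝ)
  have hB := ((B.hasFDerivAt_of_bilinear (hasFDerivAt_id z) (hasFDerivAt_id z)).const_mul
    (-(1/2) : ℝ)).exp
  rw [show gaussianKernel A = fun x => Real.exp (-(1/2) * B (id x) (id x)) by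
    ext x; simp [gaussianKernel, B, Matrix.toLinearMap₂'_apply'], hB.fderiv]
  have hzv : z ⬝ᵥ (A *ᵥ v) = (A *ᵥ z) ⬝ᵥ v := by
    rw [dotProduct_mulVec, ← mulVec_transpose, hA.eq]
  simp only [B, id_eq, one_div, neg_mul, smul_add, neg_smul, smul_neg, smul_eq_mul,
    _root_.add_apply, _root_.neg_apply, _root_.smul_apply, LinearMap.toContinuousBilinearMap_apply,
    toLinearMap₂'_apply', ContinuousLinearMap.precompR_apply, ContinuousLinearMap.compL_apply,
    ContinuousLinearMap.comp_id, ContinuousLinearMap.precompL_apply, ContinuousLinearMap.id_apply,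
    hzv, dotProduct_comm v]
  ring

end gaussianKernel

theorem gmP_eq_integral_gaussianKernel {d : ℕ} (μ : Measure (Fin d → ℝ))
    (S : Matrix (Fin d) (Fin d) ℝ) : gmP μ S = fun x => ∫ y, gaussianKernel S⁻¹ (x - y) ∂μ :=
  rfl

section GaussianMixture

variable {d : ℕ} {μ : Measure (Fin d → ℝ)} [IsFiniteMeasure μ] {K : Set (Fin d → ℝ)}

theorem gmP_pos [NeZero μ] (hK : IsCompact K) (hμK : μ Kᶜ = 0) (S : Matrix (Fin d) (Fin d) ℝ)
    (x : Fin d → ℝ) : 0 < gmP μ S x :=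
  integral_exp_pos (((gaussianKernel.continuous S⁻¹).comp
    (continuous_sub_left x)).integrable_of_measure_compl_eq_zero hK hμK)

theorem gmP_mul_integral_gmTilt [NeZero μ] (hK : IsCompact K) (hμK : μ Kᶜ = 0)
    (S : Matrix (Fin d) (Fin d) ℝ) (x : Fin d → ℝ) (j : Fin d) :
    gmP μ S x * ∫ y, y j ∂(gmTilt μ S x) = ∫ y, y j * gaussianKernel S⁻¹ (x - y) ∂μ := by
  have hg : Continuous fun y => gaussianKernel S⁻¹ (x - y) := by fun_prop
  have h : ∫ y, y j ∂(gmTilt μ S x) =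
      (gmP μ S x)⁻¹ • ∫ y, gaussianKernel S⁻¹ (x - y) • y j ∂μ :=
    integral_inv_smul_withDensity_ofReal (.of_forall fun y => (gaussianKernel.pos _ _).le)
      (hg.integrable_of_measure_compl_eq_zero hK hμK) _
  rw [h, smul_eq_mul, mul_inv_cancel_left₀ (gmP_pos hK hμK S x).ne']
  simp_rw [smul_eq_mul, mul_comm (gaussianKernel _ _)]

theorem integral_mulVec_sub_mul_gaussianKernel [NeZero μ] (hK : IsCompact K) (hμK : μ Kᶜ = 0)
    (S : Matrix (Fin d) (Fin d) ℝ) (x : Fin d → ℝ) (i : Fin d) :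
    ∫ y, (S⁻¹ *ᵥ (x - y)) i * gaussianKernel S⁻¹ (x - y) ∂μ =
      gmP μ S x * (S⁻¹ *ᵥ (x - fun j => ∫ y, y j ∂(gmTilt μ S x))) i := by
  set m := fun j => ∫ y, y j ∂(gmTilt μ S x)
  have hint {f : (Fin d → ℝ) → ℝ} (hf : Continuous f) : Integrable f μ :=
    hf.integrable_of_measure_compl_eq_zero hK hμK
  have hcoord (j : Fin d) :
      ∫ y, (x - y) j * gaussianKernel S⁻¹ (x - y) ∂μ = gmP μ S x * (x - m) j := by
    simp only [Pi.sub_apply, sub_mul, mul_sub]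
    rw [integral_sub (hint (by fun_prop)) (hint (by fun_prop)), integral_const_mul,
      ← gmP_mul_integral_gmTilt hK hμK, mul_comm]
    rfl
  calc ∫ y, (S⁻¹ *ᵥ (x - y)) i * gaussianKernel S⁻¹ (x - y) ∂μ
      = ∑ j, S⁻¹ i j * ∫ y, (x - y) j * gaussianKernel S⁻¹ (x - y) ∂μ := by
        simp only [mulVec, dotProduct, Finset.sum_mul, mul_assoc]
        rw [integral_finsetSum _ fun j _ => hint (by fun_prop)]
        simp_rw [integral_const_mul]
    _ = gmP μ S x * (S⁻¹ *ᵥ (x - m)) i := by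
        simp only [hcoord, mulVec, dotProduct, Finset.mul_sum]
        exact Finset.sum_congr rfl fun j _ => by ring

end GaussianMixture

/-- **Score (Tweedie) formula for Gaussian mixtures.**  For a compactly supported mixing
probability measure `μ` and symmetric positive definite `Σ`, the mixture density
`p(x) = ∫ exp(-½(x-y)ᵀΣ⁻¹(x-y)) dμ(y)` is smooth and strictly positive, and
`∇ log p(x) = -Σ⁻¹(x - E_{μ_x}[y])`, where `μ_x` is the tilted mixing measure. -/
theorem gaussian_mixture_score
    (d : ℕ) (μ : Measure (Fin d → ℝ)) [IsProbabilityMeasure μ]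
    (hsupp : ∃ K : Set (Fin d → ℝ), IsCompact K ∧ μ Kᶜ = 0)
    (S : Matrix (Fin d) (Fin d) ℝ) (hS : S.PosDef) :
    ContDiff ℝ (⊤ : ℕ∞) (gmP μ S) ∧
    (∀ x, 0 < gmP μ S x) ∧
    (∀ (x : Fin d → ℝ) (i : Fin d),
      fderiv ℝ (fun z => Real.log (gmP μ S z)) x (Pi.single i 1) =
        -((S⁻¹ *ᵥ (x - fun j => ∫ y, y j ∂(gmTilt μ S x))) i)) := by
  obtain ⟨K, hK, hμK⟩ := hsupp
  have hA : S⁻¹.IsSymm := (isHermitian_iff_isSymm.1 hS.isHermitian).inv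
  have hsmooth : ContDiff ℝ (⊤ : ℕ∞) (gmP μ S) :=
    contDiff_integral_comp_sub hK hμK (gaussianKernel.contDiff S⁻¹)
  refine ⟨hsmooth, gmP_pos hK hμK S, fun x i => ?_⟩
  have hderiv : fderiv ℝ (gmP μ S) x (Pi.single i 1) =
      -(gmP μ S x * (S⁻¹ *ᵥ (x - fun j => ∫ y, y j ∂(gmTilt μ S x))) i) := by
    rw [← integral_mulVec_sub_mul_gaussianKernel hK hμK, ← integral_neg,
      gmP_eq_integral_gaussianKernel]
    simpa only [gaussianKernel.fderiv_apply hA, dotProduct_single_one] using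
      fderiv_integral_comp_sub_apply hK hμK (gaussianKernel.contDiff S⁻¹) x (Pi.single i 1)
  rw [fderiv.log (hsmooth.differentiable (by simp) x) (gmP_pos hK hμK S x).ne',
    _root_.smul_apply, hderiv, smul_eq_mul, mul_neg,
    inv_mul_cancel_left₀ (gmP_pos hK hμK S x).ne']
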